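/- For every fixed t ∈ ℝ, the function α ↦ X(t,α) is left-continuous and locally of bounded variation on ℝ; moreover, for every s ∈ ℝ with t ≥ s + τ_N and every j ∈ {1,…,N}, the matrix-valued Lebesgue–Stieltjes measures on [s, s+τ_j) satisfy d_α X(t,α) = Σ_{j'=1}^N D_{j'}(t) · d_α X(t−τ_{j'}, α) as measures on [s, s+τ_j). -/

import Mathlib

open MeasureTheory Set
open scoped ENNReal NNReal
open scoped Matrix.Norms.L2Operator

noncomputable section

-- The Lebesgue–Stieltjes measure of a monotone function (zero if not monotone).
open scoped Classical in
noncomputable def monoMeasure (m : ℝ → ℝ) : Measure ℝ :=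
  if h : Monotone m then h.stieltjesFunction.measure else 0

/-- The function `f` clamped to the interval `[c,e]`. -/
def clampOn (f : ℝ → ℝ) (c e : ℝ) : ℝ → ℝ := fun x => f (max c (min x e))

/-- Cumulative total variation of the clamped function. -/
def varFun (f : ℝ → ℝ) (c e : ℝ) : ℝ → ℝ :=
  fun x => (eVariationOn (clampOn f c e) (Icc c x)).toReal

/-- Positive (Jordan) part. -/
def posPartFun (f : ℝ → ℝ) (c e : ℝ) : ℝ → ℝ :=
  fun x => (varFun f c e x + clampOn f c e x - f c) / 2

/-- Negative (Jordan) part. -/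
def negPartFun (f : ℝ → ℝ) (c e : ℝ) : ℝ → ℝ :=
  fun x => (varFun f c e x - clampOn f c e x + f c) / 2

/-- Lebesgue–Stieltjes integral of `φ` against (the measure associated with the
restriction to `[c,e)` of) the function `f`, over `[c,e)`. -/
def lsIntIcoR (f : ℝ → ℝ) (c e : ℝ) (φ : ℝ → ℝ) : ℝ :=
  (∫ x in Ico c e, φ x ∂(monoMeasure (posPartFun f c e))) -
  (∫ x in Ico c e, φ x ∂(monoMeasure (negPartFun f c e)))

/-- Same, over the open interval `(c,e)`. -/
def lsIntIooR (f : ℝ → ℝ) (c e : ℝ) (φ : ℝ → ℝ) : ℝ :=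
  (∫ x in Ioo c e, φ x ∂(monoMeasure (posPartFun f c e))) -
  (∫ x in Ioo c e, φ x ∂(monoMeasure (negPartFun f c e)))

/-- Complex Lebesgue–Stieltjes integral `∫_{[c,e)} φ df`. -/
def lsIntIcoC (f : ℝ → ℂ) (c e : ℝ) (φ : ℝ → ℂ) : ℂ :=
  (lsIntIcoR (fun x => (f x).re) c e (fun x => (φ x).re)
    - lsIntIcoR (fun x => (f x).im) c e (fun x => (φ x).im))
  + Complex.I * (lsIntIcoR (fun x => (f x).re) c e (fun x => (φ x).im)
    + lsIntIcoR (fun x => (f x).im) c e (fun x => (φ x).re))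

def lsIntIooC (f : ℝ → ℂ) (c e : ℝ) (φ : ℝ → ℂ) : ℂ :=
  (lsIntIooR (fun x => (f x).re) c e (fun x => (φ x).re)
    - lsIntIooR (fun x => (f x).im) c e (fun x => (φ x).im))
  + Complex.I * (lsIntIooR (fun x => (f x).re) c e (fun x => (φ x).im)
    + lsIntIooR (fun x => (f x).im) c e (fun x => (φ x).re))

/-- `∫_{[c,e)} dF(τ) G(τ)` for matrix-valued `F` (the integrator) and `G`. -/
def lsIntIcoMM {d : ℕ} (F : ℝ → Matrix (Fin d) (Fin d) ℂ) (c e : ℝ)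
    (G : ℝ → Matrix (Fin d) (Fin d) ℂ) : Matrix (Fin d) (Fin d) ℂ :=
  Matrix.of fun i k => ∑ j, lsIntIcoC (fun τ => F τ i j) c e (fun τ => G τ j k)

/-- `∫_{[c,e)} dF(τ) g(τ)` for matrix-valued `F` and vector-valued `g`. -/
def lsIntIcoMV {d : ℕ} (F : ℝ → Matrix (Fin d) (Fin d) ℂ) (c e : ℝ)
    (g : ℝ → Fin d → ℂ) : Fin d → ℂ :=
  fun i => ∑ j, lsIntIcoC (fun τ => F τ i j) c e (fun τ => g τ j)

def lsIntIooMV {d : ℕ} (F : ℝ → Matrix (Fin d) (Fin d) ℂ) (c e : ℝ)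
    (g : ℝ → Fin d → ℂ) : Fin d → ℂ :=
  fun i => ∑ j, lsIntIooC (fun τ => F τ i j) c e (fun τ => g τ j)

instance matrixMeasurableSpace {d : ℕ} : MeasurableSpace (Matrix (Fin d) (Fin d) ℂ) :=
  inferInstanceAs (MeasurableSpace (Fin d → Fin d → ℂ))

/-- A Stieltjes–Volterra kernel of type `B^∞` on `[a,b] × [a,b]`. -/
def IsSVKernel (d : ℕ) (a b : ℝ) (κ : ℝ → ℝ → Matrix (Fin d) (Fin d) ℂ) : Prop :=
  Measurable ((Icc a b ×ˢ Icc a b).restrict (fun p : ℝ × ℝ => κ p.1 p.2)) ∧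
  (∀ t ∈ Icc a b, ∀ τ ∈ Icc a b, t ≤ τ → κ t τ = 0) ∧
  (∀ t ∈ Icc a b, ∀ x ∈ Icc a b, ContinuousWithinAt (κ t) (Icc a b ∩ Iio x) x) ∧
  (∃ C : ℝ, ∀ t ∈ Icc a b, eVariationOn (κ t) (Icc a b) ≤ ENNReal.ofReal C) ∧
  (∀ ε > (0:ℝ), ∃ η > (0:ℝ), ∀ t ∈ Icc a b, ∀ τ ∈ Icc a b, 0 < t - τ → t - τ < η →
      eVariationOn (κ t) (Ico τ t) < ENNReal.ofReal ε)

/-- The norm `‖κ‖_{[a,b]} = sup_t ‖κ(t,·)‖_{BV([a,b])}` (base point `b`). -/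
def KNorm (d : ℕ) (a b : ℝ) (κ : ℝ → ℝ → Matrix (Fin d) (Fin d) ℂ) : ℝ≥0∞ :=
  ⨆ t ∈ Icc a b, eVariationOn (κ t) (Icc a b)

/-- `ρ` is a resolvent of the kernel `κ`. -/
def IsResolvent (d : ℕ) (a b : ℝ) (κ ρ : ℝ → ℝ → Matrix (Fin d) (Fin d) ℂ) : Prop :=
  IsSVKernel d a b ρ ∧
  ∀ t ∈ Icc a b, ∀ β ∈ Icc a b,
    ρ t β = -κ t β + lsIntIcoMM (κ t) β t (fun τ => ρ τ β)

/-- The value on the Borel set `B` of the (signed) Lebesgue–Stieltjes measure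
associated with the restriction of `f` to `[c,e)`. -/
def lsValR (f : ℝ → ℝ) (c e : ℝ) (B : Set ℝ) : ℝ :=
  (monoMeasure (posPartFun f c e) (B ∩ Ico c e)).toReal -
  (monoMeasure (negPartFun f c e) (B ∩ Ico c e)).toReal

/-- Complex-valued version of `lsValR`. -/
def lsValC (f : ℝ → ℂ) (c e : ℝ) (B : Set ℝ) : ℂ :=
  ⟨lsValR (fun x => (f x).re) c e B, lsValR (fun x => (f x).im) c e B⟩

/-- Matrix-valued version of `lsValR`: the matrix-valued Lebesgue–Stieltjes measure
associated with the restriction of `F` to `[c,e)`, evaluated on `B`. -/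
def lsValM {d : ℕ} (F : ℝ → Matrix (Fin d) (Fin d) ℂ) (c e : ℝ) (B : Set ℝ) :
    Matrix (Fin d) (Fin d) ℂ :=
  Matrix.of fun i j => lsValC (fun τ => F τ i j) c e B

/-! Since every delay is at least `δ = τ 0 > 0`, and `X t` vanishes to the right of `t`, an
induction on `t` in steps of `δ` transfers left continuity and bounded variation from the
`X (t - τ j)` to `X t = 1 + ∑ j, D j t * X (t - τ j)`, up to the unit jump at `t`.

For `s + τ j ≤ t` the recursion holds on all of `[s, s + τ j]`, so the identity of measures
follows from linearity of the Lebesgue–Stieltjes measure on functions of bounded variation.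
This linearity holds because the signed measure `μ_p - μ_n` does not depend on the monotone
decomposition `p - n` of (the clamped) `f`: two decompositions satisfy `p + n' = p' + n`, and
`m ↦ μ_m` is additive on monotone functions. -/

open Filter Topology

theorem eVariationOn_Icc_add_edist_le {α E : Type*} [LinearOrder α] [PseudoEMetricSpace E]
    (g : α → E) {c x y : α} (hcx : c ≤ x) (hxy : x ≤ y) :
    eVariationOn g (Icc c x) + edist (g x) (g y) ≤ eVariationOn g (Icc c y) := by
  have hsplit := eVariationOn.Icc_add_Icc g hcx hxy (mem_univ x)
  simp only [univ_inter] at hsplit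
  rw [← hsplit]
  gcongr
  exact eVariationOn.edist_le g (left_mem_Icc.2 hxy) (right_mem_Icc.2 hxy)

section BoundedVariation

variable {α : Type*} [LinearOrder α] {E : Type*} [SeminormedAddCommGroup E]
  {f g : α → E} {s : Set α}

theorem eVariationOn_add_le (f g : α → E) (s : Set α) :
    eVariationOn (fun x => f x + g x) s ≤ eVariationOn f s + eVariationOn g s := by
  refine iSup_le fun ⟨n, u, hu, us⟩ => ?_
  calc ∑ i ∈ Finset.range n, edist (f (u (i + 1)) + g (u (i + 1))) (f (u i) + g (u i))
      ≤ ∑ i ∈ Finset.range n,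
          (edist (f (u (i + 1))) (f (u i)) + edist (g (u (i + 1))) (g (u i))) :=
        Finset.sum_le_sum fun i _ => edist_add_add_le _ _ _ _
    _ ≤ eVariationOn f s + eVariationOn g s := by
        rw [Finset.sum_add_distrib]
        exact add_le_add (eVariationOn.sum_le hu us) (eVariationOn.sum_le hu us)

theorem BoundedVariationOn.add (hf : BoundedVariationOn f s) (hg : BoundedVariationOn g s) :
    BoundedVariationOn (fun x => f x + g x) s :=
  ne_top_of_le_ne_top (ENNReal.add_ne_top.2 ⟨hf, hg⟩) (eVariationOn_add_le f g s)

theorem BoundedVariationOn.neg (hf : BoundedVariationOn f s) :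
    BoundedVariationOn (fun x => -f x) s := by
  simpa only [BoundedVariationOn, eVariationOn, edist_neg_neg] using hf

theorem BoundedVariationOn.sub (hf : BoundedVariationOn f s) (hg : BoundedVariationOn g s) :
    BoundedVariationOn (fun x => f x - g x) s := by
  simpa only [sub_eq_add_neg] using hf.add hg.neg

theorem boundedVariationOn_const (v : E) : BoundedVariationOn (fun _ : α => v) s := by
  simp [BoundedVariationOn, eVariationOn.constant_on (f := fun _ : α => v) (s := s)
    (by rintro _ ⟨_, _, rfl⟩ _ ⟨_, _, rfl⟩; rfl)]

theorem BoundedVariationOn.congr (hf : BoundedVariationOn f s) (h : EqOn f g s) :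
    BoundedVariationOn g s := by
  rwa [BoundedVariationOn, ← eVariationOn.eq_of_eqOn h]

theorem BoundedVariationOn.finsetSum {ι : Type*} (t : Finset ι) {f : ι → α → E}
    (hf : ∀ i ∈ t, BoundedVariationOn (f i) s) :
    BoundedVariationOn (fun x => ∑ i ∈ t, f i x) s := by
  classical
  induction t using Finset.induction with
  | empty => simpa using boundedVariationOn_const (0 : E)
  | insert a t ha ih =>
    simp only [Finset.sum_insert ha]
    exact (hf a (Finset.mem_insert_self a t)).add
      (ih fun i hi => hf i (Finset.mem_insert_of_mem hi))

theorem BoundedVariationOn.clm_comp {𝕜 : Type*} [NontriviallyNormedField 𝕜]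
    [NormedSpace 𝕜 E] {F : Type*} [SeminormedAddCommGroup F] [NormedSpace 𝕜 F]
    (L : E →L[𝕜] F) (hf : BoundedVariationOn f s) :
    BoundedVariationOn (fun x => L (f x)) s :=
  L.lipschitz.comp_boundedVariationOn hf

theorem boundedVariationOn_ite_lt [NormedSpace ℝ E] (t : α) (v : E) :
    BoundedVariationOn (fun x => if t < x then v else 0) s := by
  have hmono : Monotone fun x => if t < x then (1 : ℝ) else 0 := fun x y hxy => by
    by_cases hx : t < x
    · simp [hx, hx.trans_le hxy]
    · simp only [hx, if_false]
      split_ifs <;> norm_num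
  have hbv := (hmono.monotoneOn s).boundedVariationOn (C := 1)
    fun x _ => by split_ifs <;> norm_num
  refine (hbv.clm_comp (ContinuousLinearMap.toSpanSingleton ℝ v)).congr fun x _ => ?_
  by_cases h : t < x <;> simp [h]

theorem BoundedVariationOn.const_mul {A : Type*} [SeminormedRing A] [NormedAlgebra ℝ A]
    {f : α → A} (a : A) (hf : BoundedVariationOn f s) :
    BoundedVariationOn (fun x => a * f x) s :=
  hf.clm_comp (ContinuousLinearMap.mul ℝ A a)

theorem BoundedVariationOn.re {f : α → ℂ} (hf : BoundedVariationOn f s) :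
    BoundedVariationOn (fun x => (f x).re) s :=
  hf.clm_comp Complex.reCLM

theorem BoundedVariationOn.im {f : α → ℂ} (hf : BoundedVariationOn f s) :
    BoundedVariationOn (fun x => (f x).im) s :=
  hf.clm_comp Complex.imCLM

theorem BoundedVariationOn.matrix_entry {d : ℕ} {F : α → Matrix (Fin d) (Fin d) ℂ}
    (hF : BoundedVariationOn F s) (i k : Fin d) :
    BoundedVariationOn (fun x => F x i k) s :=
  hF.clm_comp (Matrix.entryLinearMap ℂ ℂ i k).toContinuousLinearMap

end BoundedVariation

theorem Monotone.stieltjesFunction_add {f g : ℝ → ℝ} (hf : Monotone f) (hg : Monotone g) :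
    (hf.add hg).stieltjesFunction = hf.stieltjesFunction + hg.stieltjesFunction :=
  StieltjesFunction.ext fun x => tendsto_nhds_unique ((hf.add hg).tendsto_rightLim x)
    ((hf.tendsto_rightLim x).add (hg.tendsto_rightLim x))

theorem Monotone.stieltjesFunction_const_mul {f : ℝ → ℝ} (hf : Monotone f) (a : ℝ≥0) :
    (hf.const_mul a.coe_nonneg).stieltjesFunction = a • hf.stieltjesFunction :=
  StieltjesFunction.ext fun x =>
    tendsto_nhds_unique ((hf.const_mul a.coe_nonneg).tendsto_rightLim x)
      ((hf.tendsto_rightLim x).const_mul (a : ℝ))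

theorem monoMeasure_add {f g : ℝ → ℝ} (hf : Monotone f) (hg : Monotone g) :
    monoMeasure (fun x => f x + g x) = monoMeasure f + monoMeasure g := by
  rw [monoMeasure, monoMeasure, monoMeasure, dif_pos (hf.add hg), dif_pos hf, dif_pos hg,
    hf.stieltjesFunction_add hg, StieltjesFunction.measure_add]

theorem monoMeasure_const_mul {f : ℝ → ℝ} (hf : Monotone f) (a : ℝ≥0) :
    monoMeasure (fun x => a * f x) = a • monoMeasure f := by
  rw [monoMeasure, monoMeasure, dif_pos (hf.const_mul a.coe_nonneg), dif_pos hf,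
    hf.stieltjesFunction_const_mul, StieltjesFunction.measure_smul]

instance (f : ℝ → ℝ) : IsLocallyFiniteMeasure (monoMeasure f) := by
  unfold monoMeasure
  split <;> infer_instance

theorem monoMeasure_inter_Ico_ne_top (f : ℝ → ℝ) (B : Set ℝ) (c e : ℝ) :
    monoMeasure f (B ∩ Ico c e) ≠ ⊤ :=
  ne_top_of_le_ne_top isCompact_Icc.measure_lt_top.ne
    (measure_mono (inter_subset_right.trans Ico_subset_Icc_self))

theorem monoMeasure_add_toReal {f g : ℝ → ℝ} (hf : Monotone f) (hg : Monotone g)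
    (B : Set ℝ) (c e : ℝ) :
    (monoMeasure (fun x => f x + g x) (B ∩ Ico c e)).toReal =
      (monoMeasure f (B ∩ Ico c e)).toReal + (monoMeasure g (B ∩ Ico c e)).toReal := by
  rw [monoMeasure_add hf hg, Measure.add_apply,
    ENNReal.toReal_add (monoMeasure_inter_Ico_ne_top _ _ _ _)
      (monoMeasure_inter_Ico_ne_top _ _ _ _)]

theorem monoMeasure_const_mul_toReal {f : ℝ → ℝ} (hf : Monotone f) (a : ℝ≥0)
    (A : Set ℝ) :
    (monoMeasure (fun x => a * f x) A).toReal = a * (monoMeasure f A).toReal := by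
  rw [monoMeasure_const_mul hf, Measure.smul_apply, ENNReal.toReal_smul, NNReal.smul_def,
    smul_eq_mul]

section JordanDecomposition

variable {f : ℝ → ℝ} {c e : ℝ}

theorem clampOn_max (hc : c ≤ e) (x : ℝ) : clampOn f c e (max c x) = clampOn f c e x := by
  unfold clampOn
  congr 1
  grind

theorem varFun_max (x : ℝ) : varFun f c e (max c x) = varFun f c e x := by
  rcases le_total c x with h | h
  · rw [max_eq_right h]
  · rw [max_eq_left h, varFun, varFun, eVariationOn.subsingleton _ (subsingleton_Icc_of_ge h),
      Icc_self, eVariationOn.subsingleton _ subsingleton_singleton]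

theorem eVariationOn_clampOn_le (hc : c ≤ e) (s : Set ℝ) :
    eVariationOn (clampOn f c e) s ≤ eVariationOn f (Icc c e) :=
  eVariationOn.comp_le_of_monotoneOn f _
    (fun _ _ _ _ h => max_le_max le_rfl (min_le_min_right e h))
    fun _ _ => ⟨le_max_left _ _, max_le hc (min_le_right _ _)⟩

theorem varFun_add_abs_sub_le (hf : BoundedVariationOn f (Icc c e)) (hc : c ≤ e) {x y : ℝ}
    (hxy : x ≤ y) :
    varFun f c e x + |clampOn f c e y - clampOn f c e x| ≤ varFun f c e y := by
  suffices key : ∀ x y, c ≤ x → x ≤ y →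
      varFun f c e x + |clampOn f c e y - clampOn f c e x| ≤ varFun f c e y by
    rw [← varFun_max x, ← varFun_max y, ← clampOn_max hc x, ← clampOn_max hc y]
    exact key _ _ (le_max_left _ _) (max_le_max_left c hxy)
  intro x y hcx hxy
  have hfin : ∀ z, eVariationOn (clampOn f c e) (Icc c z) ≠ ⊤ := fun z =>
    ne_top_of_le_ne_top hf (eVariationOn_clampOn_le hc _)
  rw [varFun, varFun, abs_sub_comm, ← Real.dist_eq, dist_edist,
    ← ENNReal.toReal_add (hfin x) (edist_ne_top _ _)]
  exact ENNReal.toReal_mono (hfin y) (eVariationOn_Icc_add_edist_le _ hcx hxy)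

theorem posPartFun_sub_negPartFun (f : ℝ → ℝ) (c e x : ℝ) :
    posPartFun f c e x - negPartFun f c e x = clampOn f c e x - f c := by
  unfold posPartFun negPartFun
  ring

theorem monotone_posPartFun (hf : BoundedVariationOn f (Icc c e)) (hc : c ≤ e) :
    Monotone (posPartFun f c e) := fun x y hxy => by
  have := varFun_add_abs_sub_le hf hc hxy
  have := neg_abs_le (clampOn f c e y - clampOn f c e x)
  unfold posPartFun
  linarith

theorem monotone_negPartFun (hf : BoundedVariationOn f (Icc c e)) (hc : c ≤ e) :
    Monotone (negPartFun f c e) := fun x y hxy => by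
  have := varFun_add_abs_sub_le hf hc hxy
  have := le_abs_self (clampOn f c e y - clampOn f c e x)
  unfold negPartFun
  linarith

end JordanDecomposition

section lsValR

variable {f g : ℝ → ℝ} {c e : ℝ} {B : Set ℝ}

theorem lsValR_congr (hc : c ≤ e) (h : EqOn f g (Icc c e)) :
    lsValR f c e B = lsValR g c e B := by
  have hclamp : clampOn f c e = clampOn g c e :=
    funext fun x => h ⟨le_max_left _ _, max_le hc (min_le_right _ _)⟩
  have hc' : f c = g c := h (left_mem_Icc.2 hc)
  unfold lsValR posPartFun negPartFun varFun
  rw [hclamp, hc']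

theorem lsValR_const (k : ℝ) : lsValR (fun _ => k) c e B = 0 := by
  have : posPartFun (fun _ => k) c e = negPartFun (fun _ => k) c e := by
    funext x
    simp [posPartFun, negPartFun, clampOn]
  rw [lsValR, this, sub_self]

theorem lsValR_eq_of_sub_eq {p n : ℝ → ℝ} (hc : c ≤ e) (hf : BoundedVariationOn f (Icc c e))
    (hp : Monotone p) (hn : Monotone n) (h : ∀ x, clampOn f c e x - f c = p x - n x) :
    lsValR f c e B =
      (monoMeasure p (B ∩ Ico c e)).toReal - (monoMeasure n (B ∩ Ico c e)).toReal := by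
  have hP := monotone_posPartFun hf hc
  have hN := monotone_negPartFun hf hc
  have hsum : (fun x => posPartFun f c e x + n x) = fun x => p x + negPartFun f c e x :=
    funext fun x => by linarith [h x, posPartFun_sub_negPartFun f c e x]
  have hμ := congrArg (fun m => (monoMeasure m (B ∩ Ico c e)).toReal) hsum
  simp only [monoMeasure_add_toReal hP hn, monoMeasure_add_toReal hp hN] at hμ
  rw [lsValR]
  linarith

theorem lsValR_add (hc : c ≤ e) (hf : BoundedVariationOn f (Icc c e))
    (hg : BoundedVariationOn g (Icc c e)) :
    lsValR (fun x => f x + g x) c e B = lsValR f c e B + lsValR g c e B := by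
  have hPf := monotone_posPartFun hf hc
  have hNf := monotone_negPartFun hf hc
  have hPg := monotone_posPartFun hg hc
  have hNg := monotone_negPartFun hg hc
  rw [lsValR_eq_of_sub_eq hc (hf.add hg) (hPf.add hPg) (hNf.add hNg) fun x => ?_,
    monoMeasure_add_toReal hPf hPg, monoMeasure_add_toReal hNf hNg, lsValR, lsValR]
  · ring
  · have hjf := posPartFun_sub_negPartFun f c e x
    have hjg := posPartFun_sub_negPartFun g c e x
    unfold clampOn at hjf hjg ⊢
    linear_combination -hjf - hjg

theorem lsValR_const_mul (a : ℝ) (hc : c ≤ e) (hf : BoundedVariationOn f (Icc c e)) :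
    lsValR (fun x => a * f x) c e B = a * lsValR f c e B := by
  have hP := monotone_posPartFun hf hc
  have hN := monotone_negPartFun hf hc
  have hjordan := posPartFun_sub_negPartFun f c e
  rcases le_total 0 a with ha | ha
  · lift a to ℝ≥0 using ha
    rw [lsValR_eq_of_sub_eq hc (hf.const_mul _) (hP.const_mul a.coe_nonneg)
        (hN.const_mul a.coe_nonneg) fun x => ?_,
      monoMeasure_const_mul_toReal hP, monoMeasure_const_mul_toReal hN, lsValR, mul_sub]
    have := hjordan x
    unfold clampOn at this ⊢
    linear_combination -(a : ℝ) * this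
  · lift -a to ℝ≥0 using neg_nonneg.2 ha with b hb
    obtain rfl : a = -b := by linarith
    rw [lsValR_eq_of_sub_eq hc (hf.const_mul _) (hN.const_mul b.coe_nonneg)
        (hP.const_mul b.coe_nonneg) fun x => ?_,
      monoMeasure_const_mul_toReal hN, monoMeasure_const_mul_toReal hP, lsValR]
    · ring
    · have := hjordan x
      unfold clampOn at this ⊢
      linear_combination (b : ℝ) * this

end lsValR

section lsValC

variable {f g : ℝ → ℂ} {c e : ℝ} {B : Set ℝ}

theorem lsValC_congr (hc : c ≤ e) (h : EqOn f g (Icc c e)) :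
    lsValC f c e B = lsValC g c e B := by
  rw [lsValC, lsValC, lsValR_congr hc fun x hx => congrArg Complex.re (h hx),
    lsValR_congr hc fun x hx => congrArg Complex.im (h hx)]

theorem lsValC_const (k : ℂ) : lsValC (fun _ => k) c e B = 0 := by
  rw [lsValC, lsValR_const, lsValR_const]
  rfl

theorem lsValC_add (hc : c ≤ e) (hf : BoundedVariationOn f (Icc c e))
    (hg : BoundedVariationOn g (Icc c e)) :
    lsValC (fun x => f x + g x) c e B = lsValC f c e B + lsValC g c e B :=
  Complex.ext (lsValR_add hc hf.re hg.re) (lsValR_add hc hf.im hg.im)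

theorem lsValC_const_mul (a : ℂ) (hc : c ≤ e) (hf : BoundedVariationOn f (Icc c e)) :
    lsValC (fun x => a * f x) c e B = a * lsValC f c e B := by
  apply Complex.ext
  · change lsValR (fun x => (a * f x).re) c e B =
      a.re * lsValR (fun x => (f x).re) c e B - a.im * lsValR (fun x => (f x).im) c e B
    rw [show (fun x => (a * f x).re) = fun x => a.re * (f x).re + -a.im * (f x).im from
        funext fun x => by simp only [Complex.mul_re]; ring,
      lsValR_add hc (hf.re.const_mul _) (hf.im.const_mul _), lsValR_const_mul _ hc hf.re,
      lsValR_const_mul _ hc hf.im]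
    ring
  · change lsValR (fun x => (a * f x).im) c e B =
      a.re * lsValR (fun x => (f x).im) c e B + a.im * lsValR (fun x => (f x).re) c e B
    rw [show (fun x => (a * f x).im) = fun x => a.re * (f x).im + a.im * (f x).re from
        funext fun x => Complex.mul_im _ _,
      lsValR_add hc (hf.im.const_mul _) (hf.re.const_mul _), lsValR_const_mul _ hc hf.re,
      lsValR_const_mul _ hc hf.im]

theorem lsValC_finsetSum {ι : Type*} (t : Finset ι) {f : ι → ℝ → ℂ} (hc : c ≤ e)
    (hf : ∀ i ∈ t, BoundedVariationOn (f i) (Icc c e)) :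
    lsValC (fun x => ∑ i ∈ t, f i x) c e B = ∑ i ∈ t, lsValC (f i) c e B := by
  classical
  induction t using Finset.induction with
  | empty => simpa using lsValC_const 0
  | insert a t ha ih =>
    have hft : ∀ i ∈ t, BoundedVariationOn (f i) (Icc c e) :=
      fun i hi => hf i (Finset.mem_insert_of_mem hi)
    simp only [Finset.sum_insert ha]
    rw [lsValC_add hc (hf a (Finset.mem_insert_self a t)) (.finsetSum t hft), ih hft]

end lsValC

section lsValM

variable {d : ℕ} {F : ℝ → Matrix (Fin d) (Fin d) ℂ} {c e : ℝ} {B : Set ℝ}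

theorem lsValM_congr {G : ℝ → Matrix (Fin d) (Fin d) ℂ} (hc : c ≤ e)
    (h : EqOn F G (Icc c e)) :
    lsValM F c e B = lsValM G c e B :=
  Matrix.ext fun i k => lsValC_congr hc fun x hx => by rw [h hx]

theorem lsValM_const_add (A : Matrix (Fin d) (Fin d) ℂ) (hc : c ≤ e)
    (hF : BoundedVariationOn F (Icc c e)) :
    lsValM (fun x => A + F x) c e B = lsValM F c e B :=
  Matrix.ext fun i k => by
    simp only [lsValM, Matrix.of_apply, Matrix.add_apply]
    rw [lsValC_add hc (boundedVariationOn_const _) (hF.matrix_entry i k), lsValC_const, zero_add]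

theorem lsValM_finsetSum {ι : Type*} (t : Finset ι)
    {F : ι → ℝ → Matrix (Fin d) (Fin d) ℂ} (hc : c ≤ e)
    (hF : ∀ i ∈ t, BoundedVariationOn (F i) (Icc c e)) :
    lsValM (fun x => ∑ i ∈ t, F i x) c e B = ∑ i ∈ t, lsValM (F i) c e B :=
  Matrix.ext fun i k => by
    simp only [lsValM, Matrix.of_apply, Matrix.sum_apply]
    exact lsValC_finsetSum t hc fun j hj => (hF j hj).matrix_entry i k

theorem lsValM_const_mul (M : Matrix (Fin d) (Fin d) ℂ) (hc : c ≤ e)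
    (hF : BoundedVariationOn F (Icc c e)) :
    lsValM (fun x => M * F x) c e B = M * lsValM F c e B :=
  Matrix.ext fun i k => by
    simp only [lsValM, Matrix.of_apply, Matrix.mul_apply]
    rw [lsValC_finsetSum _ hc fun m _ => (hF.matrix_entry m k).const_mul _]
    exact Finset.sum_congr rfl fun m _ => lsValC_const_mul _ hc (hF.matrix_entry m k)

end lsValM

theorem Real.forall_of_forall_lt_of_forall_le_sub {P : ℝ → Prop} {c δ : ℝ} (hδ : 0 < δ)
    (base : ∀ t < c, P t) (step : ∀ t, c ≤ t → (∀ u ≤ t - δ, P u) → P t) (t : ℝ) :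
    P t := by
  have key : ∀ n : ℕ, ∀ t < c + n * δ, P t := by
    intro n
    induction n with
    | zero => simpa using base
    | succ n ih =>
      intro t ht
      rcases lt_or_ge t c with htc | htc
      · exact base t htc
      · exact step t htc fun u hu => ih u (by push_cast at ht; linarith)
  obtain ⟨n, hn⟩ := exists_nat_gt ((t - c) / δ)
  exact key n t (by rw [div_lt_iff₀ hδ] at hn; linarith)

structure IsFundamentalSolution {ι A : Type*} [Fintype ι] [Ring A] (τ : ι → ℝ)
    (D : ι → ℝ → A) (X : ℝ → ℝ → A) : Prop where
  eq_zero : ∀ t α : ℝ, t < α → X t α = 0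
  eq_one_add_sum : ∀ t α : ℝ, α ≤ t → X t α = 1 + ∑ j, D j t * X (t - τ j) α

namespace IsFundamentalSolution

variable {ι A : Type*} [Fintype ι] [NormedRing A] {τ : ι → ℝ}
  {D : ι → ℝ → A} {X : ℝ → ℝ → A} {δ : ℝ}

theorem eq_sub_ite (hX : IsFundamentalSolution τ D X) (hτ : ∀ j, 0 < τ j) (t α : ℝ) :
    X t α = (1 + ∑ j, D j t * X (t - τ j) α) - if t < α then 1 else 0 := by
  rcases le_or_gt α t with h | h
  · rw [if_neg h.not_gt, sub_zero, hX.eq_one_add_sum t α h]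
  · rw [if_pos h, hX.eq_zero t α h, Finset.sum_eq_zero fun j _ => by
      rw [hX.eq_zero _ _ (by linarith [hτ j]), mul_zero], add_zero, sub_self]

theorem continuousWithinAt_Iio (hX : IsFundamentalSolution τ D X) (hδ : 0 < δ)
    (hτ : ∀ j, δ ≤ τ j) (t x : ℝ) : ContinuousWithinAt (X t) (Iio x) x := by
  refine Real.forall_of_forall_lt_of_forall_le_sub
    (P := fun t => ContinuousWithinAt (X t) (Iio x) x) (c := x) hδ
    (fun t ht => ?_) (fun t ht ih => ?_) t
  · have hzero : X t =ᶠ[𝓝[<] x] fun _ => 0 :=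
      (eventually_nhdsWithin_of_eventually_nhds (eventually_gt_nhds ht)).mono
        fun α hα => hX.eq_zero t α hα
    exact continuousWithinAt_const.congr_of_eventuallyEq hzero (hX.eq_zero t x ht)
  · have hrec : ContinuousWithinAt (fun α => 1 + ∑ j, D j t * X (t - τ j) α) (Iio x) x :=
      continuousWithinAt_const.add (tendsto_finsetSum _ fun j _ =>
        continuousWithinAt_const.mul (ih _ (by linarith [hτ j])))
    exact hrec.congr (fun α hα => hX.eq_one_add_sum t α (hα.out.le.trans ht))
      (hX.eq_one_add_sum t x ht)

theorem boundedVariationOn [NormedAlgebra ℝ A] (hX : IsFundamentalSolution τ D X)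
    (hδ : 0 < δ) (hτ : ∀ j, δ ≤ τ j) (t c e : ℝ) :
    BoundedVariationOn (X t) (Icc c e) := by
  refine Real.forall_of_forall_lt_of_forall_le_sub
    (P := fun t => BoundedVariationOn (X t) (Icc c e)) (c := c) hδ
    (fun t ht => ?_) (fun t _ ih => ?_) t
  · exact (boundedVariationOn_const 0).congr fun α hα =>
      (hX.eq_zero t α (ht.trans_le hα.1)).symm
  · have hrec : BoundedVariationOn (fun α => 1 + ∑ j, D j t * X (t - τ j) α) (Icc c e) :=
      (boundedVariationOn_const 1).add
        (.finsetSum _ fun j _ => (ih _ (by linarith [hτ j])).const_mul (D j t))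
    exact (hrec.sub (boundedVariationOn_ite_lt t 1)).congr fun α _ =>
      (hX.eq_sub_ite (fun j => hδ.trans_le (hτ j)) t α).symm

end IsFundamentalSolution

theorem IsFundamentalSolution.lsValM_eq_sum {ι : Type*} [Fintype ι] {d : ℕ} {τ : ι → ℝ}
    {D : ι → ℝ → Matrix (Fin d) (Fin d) ℂ} {X : ℝ → ℝ → Matrix (Fin d) (Fin d) ℂ}
    (hX : IsFundamentalSolution τ D X) {δ : ℝ} (hδ : 0 < δ) (hτ : ∀ j, δ ≤ τ j) {t c e : ℝ}
    (hce : c ≤ e) (het : e ≤ t) (B : Set ℝ) :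
    lsValM (X t) c e B = ∑ j, D j t * lsValM (fun α => X (t - τ j) α) c e B := by
  have hbv := hX.boundedVariationOn hδ hτ
  rw [lsValM_congr hce fun α hα => hX.eq_one_add_sum t α (hα.2.trans het),
    lsValM_const_add _ hce (.finsetSum _ fun j _ => (hbv _ c e).const_mul _),
    lsValM_finsetSum _ hce fun j _ => (hbv _ c e).const_mul _]
  exact Finset.sum_congr rfl fun j _ => lsValM_const_mul _ hce (hbv _ c e)

theorem fundamental_solution_leftCont_locBV_measure_identity_general
    (d N : ℕ)
    (τ : Fin (N + 1) → ℝ) (hτpos : ∀ j, 0 < τ j) (hτmono : StrictMono τ)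
    (D : Fin (N + 1) → ℝ → Matrix (Fin d) (Fin d) ℂ)
    (X : ℝ → ℝ → Matrix (Fin d) (Fin d) ℂ)
    (hX0 : ∀ t α : ℝ, t < α → X t α = 0)
    (hXrec : ∀ t α : ℝ, α ≤ t → X t α = 1 + ∑ j, D j t * X (t - τ j) α) :
    -- left continuity in the second variable
    (∀ t x : ℝ, ContinuousWithinAt (X t) (Iio x) x) ∧
    -- locally bounded variation in the second variable
    (∀ t c e : ℝ, BoundedVariationOn (X t) (Icc c e)) ∧
    -- identity of measures on `[s, s+τ_j)` when `t ≥ s + τ_N`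
    (∀ s t : ℝ, s + τ (Fin.last N) ≤ t → ∀ j : Fin (N + 1),
      ∀ B : Set ℝ, MeasurableSet B →
        lsValM (X t) s (s + τ j) B =
          ∑ j', D j' t * lsValM (fun α => X (t - τ j') α) s (s + τ j) B) := by
  have hX : IsFundamentalSolution τ D X := ⟨hX0, hXrec⟩
  have hτ : ∀ j, τ 0 ≤ τ j := fun j => hτmono.monotone (Fin.zero_le j)
  refine ⟨hX.continuousWithinAt_Iio (hτpos 0) hτ, hX.boundedVariationOn (hτpos 0) hτ,
    fun s t hst j B _ => hX.lsValM_eq_sum (hτpos 0) hτ (by linarith [hτpos j]) ?_ B⟩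
  linarith [hτmono.monotone (Fin.le_last j)]

/-- **Left continuity, local bounded variation, and the measure identity for the
fundamental solution.**

For fixed `t`, `α ↦ X(t,α)` is left-continuous and locally of bounded variation on `ℝ`;
and for `t ≥ s + τ_N` and each `j`, the matrix-valued Lebesgue–Stieltjes measures on
`[s, s+τ_j)` satisfy `d_α X(t,α) = ∑_{j'} D_{j'}(t) d_α X(t-τ_{j'}, α)`. -/
theorem fundamental_solution_leftCont_locBV_measure_identity
    (d N : ℕ) (hd : 0 < d)
    (τ : Fin (N + 1) → ℝ) (hτpos : ∀ j, 0 < τ j) (hτmono : StrictMono τ)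
    (D : Fin (N + 1) → ℝ → Matrix (Fin d) (Fin d) ℂ) (hD : ∀ j, Continuous (D j))
    (X : ℝ → ℝ → Matrix (Fin d) (Fin d) ℂ)
    (hX0 : ∀ t α : ℝ, t < α → X t α = 0)
    (hXrec : ∀ t α : ℝ, α ≤ t → X t α = 1 + ∑ j, D j t * X (t - τ j) α) :
    -- left continuity in the second variable
    (∀ t x : ℝ, ContinuousWithinAt (X t) (Iio x) x) ∧
    -- locally bounded variation in the second variable
    (∀ t c e : ℝ, BoundedVariationOn (X t) (Icc c e)) ∧
    -- identity of measures on `[s, s+τ_j)` when `t ≥ s + τ_N`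
    (∀ s t : ℝ, s + τ (Fin.last N) ≤ t → ∀ j : Fin (N + 1),
      ∀ B : Set ℝ, MeasurableSet B →
        lsValM (X t) s (s + τ j) B =
          ∑ j', D j' t * lsValM (fun α => X (t - τ j') α) s (s + τ j) B) :=
  fundamental_solution_leftCont_locBV_measure_identity_general d N τ hτpos hτmono D X hX0 hXrec
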